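/- Let x, y ∈ ℂⁿ \ {0} with Re(x*y) > 0. Then the matrix H = y x⁺ − (y x⁺)* P_x, where x⁺ = x*/‖x‖² and P_x = I − x x⁺, satisfies Hx = y, H + H* ⪰ 0, and ‖H‖_F² = 2‖y‖²/‖x‖² − |x*y|²/‖x‖⁴. -/

import Mathlib

/-!
Write `R = y x⁺` and `Q = x x⁺`, so that `H = R - Rᴴ (1 - Q)`. As `Q` is an orthogonal projection
with `R (1 - Q) = 0`, two identities valid in any ring with involution give
`H + Hᴴ = Q R + (Q R)ᴴ` and `H Hᴴ = R Rᴴ + Rᴴ (1 - Q) R`. Since `Q R = (x*y / ‖x‖⁴) x x*`, the first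
shows `H + Hᴴ = (2 Re(x*y) / ‖x‖⁴) x x* ⪰ 0`; the trace of the second is `‖H‖_F²`.
-/

open Matrix
open scoped ComplexOrder

noncomputable def frobSq {n m : Type*} [Fintype n] [Fintype m] (A : Matrix n m ℂ) : ℝ :=
  ∑ i, ∑ j, ‖A i j‖ ^ 2

section StarRing

variable {R : Type*} [Ring R] [StarRing R] {r p q : R}

theorem sub_star_mul_one_sub_add_star (hq : IsSelfAdjoint q) :
    r - star r * (1 - q) + star (r - star r * (1 - q)) = q * r + star (q * r) := by
  simp only [star_sub, star_mul, star_star, star_one, hq.star_eq]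
  noncomm_ring

theorem sub_star_mul_mul_star_sub (hp : IsStarProjection p) (hrp : r * p = 0) :
    (r - star r * p) * star (r - star r * p) = r * star r + star r * p * r := by
  have hrpr : r * p * r = 0 := by rw [hrp, zero_mul]
  have hrpr' : star r * p * star r = 0 := by
    simpa [mul_assoc, hp.isSelfAdjoint.star_eq] using congrArg star hrpr
  calc (r - star r * p) * star (r - star r * p)
      = r * star r - r * p * r - star r * p * star r + star r * (p * p) * r := by
        simp only [star_sub, star_mul, star_star, hp.isSelfAdjoint.star_eq]; noncomm_ring
    _ = r * star r + star r * p * r := by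
        rw [hrpr, hrpr', hp.isIdempotentElem.eq]; abel

end StarRing

section Field

variable {𝕜 ι : Type*} [Field 𝕜] [StarRing 𝕜] [Fintype ι] (x y : ι → 𝕜)

theorem isSelfAdjoint_star_dotProduct_self : IsSelfAdjoint (star x ⬝ᵥ x) :=
  (star_dotProduct x x).symm

variable [DecidableEq ι]

noncomputable def dissipativeMap : Matrix ι ι 𝕜 :=
  (star x ⬝ᵥ x)⁻¹ • vecMulVec y (star x)
    - ((star x ⬝ᵥ x)⁻¹ • vecMulVec y (star x))ᴴ * (1 - (star x ⬝ᵥ x)⁻¹ • vecMulVec x (star x))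

theorem isStarProjection_inv_smul_vecMulVec :
    IsStarProjection ((star x ⬝ᵥ x)⁻¹ • vecMulVec x (star x)) where
  isIdempotentElem := by
    rw [IsIdempotentElem, smul_mul_smul_comm, vecMulVec_mul_vecMulVec, vecMulVec_smul, smul_smul]
    congr 1
    simpa using mul_self_mul_inv (star x ⬝ᵥ x)⁻¹
  isSelfAdjoint := by
    rw [IsSelfAdjoint, star_smul, star_inv₀, (isSelfAdjoint_star_dotProduct_self x).star_eq,
      star_eq_conjTranspose, conjTranspose_vecMulVec, star_star]

theorem inv_smul_vecMulVec_mul_one_sub :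
    (star x ⬝ᵥ x)⁻¹ • vecMulVec y (star x) * (1 - (star x ⬝ᵥ x)⁻¹ • vecMulVec x (star x)) = 0 := by
  rw [mul_sub, mul_one, smul_mul_smul_comm, vecMulVec_mul_vecMulVec, vecMulVec_smul, smul_smul,
    sub_eq_zero]
  congr 1
  simpa using (mul_self_mul_inv (star x ⬝ᵥ x)⁻¹).symm

theorem dissipativeMap_mulVec_self (hx : star x ⬝ᵥ x ≠ 0) : dissipativeMap x y *ᵥ x = y := by
  have h (z : ι → 𝕜) : ((star x ⬝ᵥ x)⁻¹ • vecMulVec z (star x)) *ᵥ x = z := by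
    rw [smul_mulVec, vecMulVec_mulVec, op_smul_eq_smul, smul_smul, inv_mul_cancel₀ hx, one_smul]
  rw [dissipativeMap, sub_mulVec, ← mulVec_mulVec, sub_mulVec, one_mulVec, h, h, sub_self,
    mulVec_zero, sub_zero]

theorem dissipativeMap_add_conjTranspose :
    dissipativeMap x y + (dissipativeMap x y)ᴴ
      = ((star x ⬝ᵥ x)⁻¹ ^ 2 * (star x ⬝ᵥ y) + star ((star x ⬝ᵥ x)⁻¹ ^ 2 * (star x ⬝ᵥ y)))
        • vecMulVec x (star x) := by
  have h := sub_star_mul_one_sub_add_star (r := (star x ⬝ᵥ x)⁻¹ • vecMulVec y (star x))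
    (isStarProjection_inv_smul_vecMulVec x).isSelfAdjoint
  simp only [star_eq_conjTranspose] at h
  rw [dissipativeMap, h, smul_mul_smul_comm, vecMulVec_mul_vecMulVec, vecMulVec_smul, smul_smul,
    conjTranspose_smul, conjTranspose_vecMulVec, star_star, add_smul, sq]

end Field

section Complex

variable {ι : Type*} [Fintype ι]

theorem star_dotProduct_self_eq_sum_norm_sq (v : ι → ℂ) :
    star v ⬝ᵥ v = ((∑ i, ‖v i‖ ^ 2 : ℝ) : ℂ) := by
  simp [dotProduct, Complex.conj_mul']

theorem frobSq_eq_re_trace_mul_conjTranspose {κ : Type*} [Fintype κ] (A : Matrix ι κ ℂ) :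
    frobSq A = (A * Aᴴ).trace.re := by
  simp [frobSq, trace, mul_apply, Complex.re_sum, Complex.mul_conj', ← Complex.ofReal_pow]

variable [DecidableEq ι] (x y : ι → ℂ)

theorem posSemidef_dissipativeMap_add_conjTranspose (hre : 0 ≤ (star x ⬝ᵥ y).re) :
    (dissipativeMap x y + (dissipativeMap x y)ᴴ).PosSemidef := by
  rw [dissipativeMap_add_conjTranspose]
  refine (posSemidef_vecMulVec_self_star x).smul ?_
  rw [star_dotProduct_self_eq_sum_norm_sq, Complex.star_def, Complex.add_conj, ← Complex.ofReal_inv,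
    ← Complex.ofReal_pow, Complex.re_ofReal_mul, Complex.zero_le_real]
  positivity

theorem frobSq_dissipativeMap (hx : x ≠ 0) :
    frobSq (dissipativeMap x y)
      = 2 * (∑ i, ‖y i‖ ^ 2) / (∑ i, ‖x i‖ ^ 2) - ‖star x ⬝ᵥ y‖ ^ 2 / (∑ i, ‖x i‖ ^ 2) ^ 2 := by
  have h := sub_star_mul_mul_star_sub (r := (star x ⬝ᵥ x)⁻¹ • vecMulVec y (star x))
    (isStarProjection_inv_smul_vecMulVec x).one_sub (inv_smul_vecMulVec_mul_one_sub x y)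
  simp only [star_eq_conjTranspose] at h
  rw [frobSq_eq_re_trace_mul_conjTranspose, dissipativeMap, h]
  simp only [mul_sub, sub_mul, mul_one, conjTranspose_smul, conjTranspose_vecMulVec, star_star,
    smul_mul_smul_comm, vecMulVec_mul_vecMulVec, trace_add, trace_sub, trace_smul, trace_vecMulVec,
    dotProduct_smul, smul_eq_mul]
  rw [dotProduct_comm y, dotProduct_comm x, smul_dotProduct, smul_eq_mul, star_dotProduct y x,
    star_dotProduct_self_eq_sum_norm_sq x, star_dotProduct_self_eq_sum_norm_sq y]
  have hA : (0 : ℝ) < ∑ i, ‖x i‖ ^ 2 := by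
    rw [← Complex.zero_lt_real, ← star_dotProduct_self_eq_sum_norm_sq]
    exact dotProduct_star_self_pos_iff.mpr hx
  set A := ∑ i, ‖x i‖ ^ 2
  set B := ∑ i, ‖y i‖ ^ 2
  set s := star x ⬝ᵥ y
  rw [← Complex.ofReal_re (2 * B / A - ‖s‖ ^ 2 / A ^ 2)]
  congr 1
  simp only [Complex.star_def, map_inv₀, Complex.conj_ofReal]
  push_cast
  field_simp
  linear_combination -Complex.conj_mul' s

end Complex

theorem dissipative_mapping_min_norm_general {n : ℕ} (x y : Fin n → ℂ) (hx : x ≠ 0)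
    (hre : 0 < (star x ⬝ᵥ y).re) :
    ((((star x ⬝ᵥ x)⁻¹ • Matrix.vecMulVec y (star x))
        - ((star x ⬝ᵥ x)⁻¹ • Matrix.vecMulVec y (star x))ᴴ *
            (1 - (star x ⬝ᵥ x)⁻¹ • Matrix.vecMulVec x (star x))).mulVec x = y) ∧
    (((((star x ⬝ᵥ x)⁻¹ • Matrix.vecMulVec y (star x))
        - ((star x ⬝ᵥ x)⁻¹ • Matrix.vecMulVec y (star x))ᴴ *
            (1 - (star x ⬝ᵥ x)⁻¹ • Matrix.vecMulVec x (star x)))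
      + (((star x ⬝ᵥ x)⁻¹ • Matrix.vecMulVec y (star x))
        - ((star x ⬝ᵥ x)⁻¹ • Matrix.vecMulVec y (star x))ᴴ *
            (1 - (star x ⬝ᵥ x)⁻¹ • Matrix.vecMulVec x (star x)))ᴴ).PosSemidef) ∧
    frobSq (((star x ⬝ᵥ x)⁻¹ • Matrix.vecMulVec y (star x))
        - ((star x ⬝ᵥ x)⁻¹ • Matrix.vecMulVec y (star x))ᴴ *
            (1 - (star x ⬝ᵥ x)⁻¹ • Matrix.vecMulVec x (star x)))
      = 2 * (∑ i, ‖y i‖ ^ 2) / (∑ i, ‖x i‖ ^ 2)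
        - ‖star x ⬝ᵥ y‖ ^ 2 / (∑ i, ‖x i‖ ^ 2) ^ 2 :=
  ⟨dissipativeMap_mulVec_self x y (dotProduct_star_self_eq_zero.not.mpr hx),
    posSemidef_dissipativeMap_add_conjTranspose x y hre.le,
    frobSq_dissipativeMap x y hx⟩

/-- For `Re(x*y) > 0`, the matrix `H = y x⁺ − (y x⁺)* P_x` maps `x` to `y`, is dissipative,
and `‖H‖_F² = 2‖y‖²/‖x‖² − |x*y|²/‖x‖⁴`. -/
theorem dissipative_mapping_min_norm {n : ℕ} (x y : Fin n → ℂ) (hx : x ≠ 0) (hy : y ≠ 0)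
    (hre : 0 < (star x ⬝ᵥ y).re) :
    ((((star x ⬝ᵥ x)⁻¹ • Matrix.vecMulVec y (star x))
        - ((star x ⬝ᵥ x)⁻¹ • Matrix.vecMulVec y (star x))ᴴ *
            (1 - (star x ⬝ᵥ x)⁻¹ • Matrix.vecMulVec x (star x))).mulVec x = y) ∧
    (((((star x ⬝ᵥ x)⁻¹ • Matrix.vecMulVec y (star x))
        - ((star x ⬝ᵥ x)⁻¹ • Matrix.vecMulVec y (star x))ᴴ *
            (1 - (star x ⬝ᵥ x)⁻¹ • Matrix.vecMulVec x (star x)))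
      + (((star x ⬝ᵥ x)⁻¹ • Matrix.vecMulVec y (star x))
        - ((star x ⬝ᵥ x)⁻¹ • Matrix.vecMulVec y (star x))ᴴ *
            (1 - (star x ⬝ᵥ x)⁻¹ • Matrix.vecMulVec x (star x)))ᴴ).PosSemidef) ∧
    frobSq (((star x ⬝ᵥ x)⁻¹ • Matrix.vecMulVec y (star x))
        - ((star x ⬝ᵥ x)⁻¹ • Matrix.vecMulVec y (star x))ᴴ *
            (1 - (star x ⬝ᵥ x)⁻¹ • Matrix.vecMulVec x (star x)))
      = 2 * (∑ i, ‖y i‖ ^ 2) / (∑ i, ‖x i‖ ^ 2)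
        - ‖star x ⬝ᵥ y‖ ^ 2 / (∑ i, ‖x i‖ ^ 2) ^ 2 :=
  dissipative_mapping_min_norm_general x y hx hre
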